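/- For a ferromagnetic RBM (J ≥ 0 entrywise) with arbitrary external fields, when the marginal distribution on the observed variables is written as an MRF Pr[X=x] ∝ exp(f(x)), the coefficient of every degree-2 monomial x_i x_j in the multilinear expansion of f is nonnegative, and is strictly positive whenever i and j have a common latent neighbor (J_{ik}, J_{jk} > 0 for some k). -/

import Mathlib

/-!
Pairing each `x` with its images under flipping `x i`, `x j` or both turns the coefficient of
`x i * x j` in a ridge function `φ (⟪w, x⟫ + b)` into an average of mixed second differences
`φ (P + a + b) + φ (P - a - b) - φ (P + a - b) - φ (P - a + b)` with `a = w i`, `b = w j`.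
For `φ = id` these vanish. For `φ = log (2 cosh)` the two pairs sum to
`log (2 (cosh 2P + cosh 2(a ± b)))`, so the difference has the sign of `a * b`; applied to each
hidden unit `k` (`a = J i k`, `b = J j k`) this gives the claim.
-/

noncomputable def pm (b : Bool) : ℝ := if b then 1 else -1

open Real Finset

@[simp] theorem pm_true : pm true = 1 := rfl

@[simp] theorem pm_false : pm false = -1 := rfl

@[simp] theorem pm_not (b : Bool) : pm (!b) = -pm b := by
  cases b <;> simp [pm]

section Cube

variable {n : ℕ}

def flipAt (k : Fin n) (x : Fin n → Bool) : Fin n → Bool :=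
  Function.update x k (!x k)

@[simp] theorem flipAt_apply_self (k : Fin n) (x : Fin n → Bool) : flipAt k x k = !x k := by
  simp [flipAt]

theorem flipAt_apply_of_ne {k l : Fin n} (h : l ≠ k) (x : Fin n → Bool) : flipAt k x l = x l :=
  Function.update_of_ne h _ _

theorem flipAt_involutive (k : Fin n) : Function.Involutive (flipAt k) := by
  intro x
  funext l
  rcases eq_or_ne l k with rfl | hne
  · simp
  · simp [flipAt_apply_of_ne hne]

theorem sum_comp_flipAt {M : Type*} [AddCommMonoid M] (k : Fin n) (G : (Fin n → Bool) → M) :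
    ∑ x, G (flipAt k x) = ∑ x, G x :=
  (flipAt_involutive k).bijective.sum_comp G

theorem sum_mul_pm_flipAt (w : Fin n → ℝ) (k : Fin n) (x : Fin n → Bool) :
    ∑ l, w l * pm (flipAt k x l) = ∑ l, w l * pm (x l) - 2 * w k * pm (x k) := by
  have hrest : ∑ l ∈ univ.erase k, w l * pm (flipAt k x l) = ∑ l ∈ univ.erase k, w l * pm (x l) :=
    sum_congr rfl fun l hl => by rw [flipAt_apply_of_ne (ne_of_mem_erase hl)]
  rw [← add_sum_erase _ _ (mem_univ k), ← add_sum_erase _ _ (mem_univ k), hrest,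
    flipAt_apply_self, pm_not]
  ring

theorem four_mul_sum_eq_sum_flipAt (i j : Fin n) (G : (Fin n → Bool) → ℝ) :
    4 * ∑ x, G x =
      ∑ x, (G x + G (flipAt i x) + G (flipAt j x) + G (flipAt i (flipAt j x))) := by
  simp only [sum_add_distrib, sum_comp_flipAt j (fun y => G (flipAt i y)), sum_comp_flipAt i,
    sum_comp_flipAt j]
  ring

end Cube

def mixedDiff (φ : ℝ → ℝ) (P a b : ℝ) : ℝ :=
  φ (P + a + b) + φ (P - a - b) - φ (P + a - b) - φ (P - a + b)

theorem mixedDiff_id (P a b : ℝ) : mixedDiff id P a b = 0 := by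
  simp only [mixedDiff, id]
  ring

noncomputable def logTwoCosh (a : ℝ) : ℝ := log (exp a + exp (-a))

theorem logTwoCosh_add_logTwoCosh (x y : ℝ) :
    logTwoCosh x + logTwoCosh y = log (2 * (cosh (x + y) + cosh (x - y))) := by
  have two_cosh (a : ℝ) : exp a + exp (-a) = 2 * cosh a := by rw [cosh_eq]; ring
  rw [logTwoCosh, logTwoCosh, ← log_mul (by positivity) (by positivity), two_cosh, two_cosh,
    cosh_add, cosh_sub]
  ring_nf

theorem mixedDiff_logTwoCosh (P a b : ℝ) :
    mixedDiff logTwoCosh P a b =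
      log (2 * (cosh (2 * P) + cosh (2 * (a + b)))) -
        log (2 * (cosh (2 * P) + cosh (2 * (a - b)))) := by
  have hout : logTwoCosh (P + a + b) + logTwoCosh (P - a - b) =
      log (2 * (cosh (2 * P) + cosh (2 * (a + b)))) := by
    rw [logTwoCosh_add_logTwoCosh]; ring_nf
  have hin : logTwoCosh (P + a - b) + logTwoCosh (P - a + b) =
      log (2 * (cosh (2 * P) + cosh (2 * (a - b)))) := by
    rw [logTwoCosh_add_logTwoCosh]; ring_nf
  rw [mixedDiff]
  linarith

theorem mixedDiff_logTwoCosh_nonneg (P : ℝ) {a b : ℝ} (hab : 0 ≤ a * b) :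
    0 ≤ mixedDiff logTwoCosh P a b := by
  have hcosh : cosh (2 * (a - b)) ≤ cosh (2 * (a + b)) := by
    rw [cosh_le_cosh, ← sq_le_sq]
    nlinarith
  rw [mixedDiff_logTwoCosh, sub_nonneg]
  gcongr

theorem mixedDiff_logTwoCosh_pos (P : ℝ) {a b : ℝ} (hab : 0 < a * b) :
    0 < mixedDiff logTwoCosh P a b := by
  have hcosh : cosh (2 * (a - b)) < cosh (2 * (a + b)) := by
    rw [cosh_lt_cosh, ← sq_lt_sq]
    nlinarith
  rw [mixedDiff_logTwoCosh, sub_pos]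
  gcongr

section Ridge

variable {n : ℕ} {i j : Fin n}

theorem four_mul_sum_ridge_mul_pm_mul_pm (φ : ℝ → ℝ) (w : Fin n → ℝ) (b : ℝ) (hij : i ≠ j) :
    4 * ∑ x : Fin n → Bool, φ (∑ l, w l * pm (x l) + b) * pm (x i) * pm (x j) =
      ∑ x : Fin n → Bool,
        mixedDiff φ (∑ l, w l * pm (x l) + b - w i * pm (x i) - w j * pm (x j)) (w i) (w j) := by
  rw [four_mul_sum_eq_sum_flipAt i j]
  refine sum_congr rfl fun x _ => ?_
  simp only [sum_mul_pm_flipAt, flipAt_apply_self, flipAt_apply_of_ne hij,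
    flipAt_apply_of_ne hij.symm]
  generalize ∑ l, w l * pm (x l) = S
  cases x i <;> cases x j <;>
    simp only [mixedDiff, pm_true, pm_false, Bool.not_true, Bool.not_false] <;> ring_nf

theorem sum_linear_mul_pm_mul_pm (h : Fin n → ℝ) (hij : i ≠ j) :
    ∑ x : Fin n → Bool, (∑ l, h l * pm (x l)) * pm (x i) * pm (x j) = 0 := by
  simpa [mixedDiff_id] using four_mul_sum_ridge_mul_pm_mul_pm id h 0 hij

theorem sum_logTwoCosh_ridge_mul_pm_mul_pm_nonneg (w : Fin n → ℝ) (b : ℝ) (hij : i ≠ j)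
    (hw : 0 ≤ w i * w j) :
    0 ≤ ∑ x : Fin n → Bool, logTwoCosh (∑ l, w l * pm (x l) + b) * pm (x i) * pm (x j) := by
  refine nonneg_of_mul_nonneg_right ?_ (four_pos : (0 : ℝ) < 4)
  rw [four_mul_sum_ridge_mul_pm_mul_pm logTwoCosh w b hij]
  exact sum_nonneg fun x _ => mixedDiff_logTwoCosh_nonneg _ hw

theorem sum_logTwoCosh_ridge_mul_pm_mul_pm_pos (w : Fin n → ℝ) (b : ℝ) (hij : i ≠ j)
    (hw : 0 < w i * w j) :
    0 < ∑ x : Fin n → Bool, logTwoCosh (∑ l, w l * pm (x l) + b) * pm (x i) * pm (x j) := by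
  refine pos_of_mul_pos_right ?_ (four_pos : (0 : ℝ) < 4).le
  rw [four_mul_sum_ridge_mul_pm_mul_pm logTwoCosh w b hij]
  exact sum_pos (fun x _ => mixedDiff_logTwoCosh_pos _ hw) univ_nonempty

end Ridge

theorem stmt14 (n m : ℕ) (J : Matrix (Fin n) (Fin m) ℝ) (hJ : ∀ i j, 0 ≤ J i j)
    (h : Fin n → ℝ) (g : Fin m → ℝ) (i j : Fin n) (hij : i ≠ j) :
    let ρ : ℝ → ℝ := fun a => Real.log (Real.exp a + Real.exp (-a))
    let f : (Fin n → ℝ) → ℝ := fun x =>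
      (∑ k, ρ ((∑ i', J i' k * x i') + g k)) + ∑ i', h i' * x i'
    let c : ℝ := ((2 : ℝ) ^ n)⁻¹ *
      ∑ x : Fin n → Bool, f (fun a => pm (x a)) * pm (x i) * pm (x j)
    0 ≤ c ∧ ((∃ k, 0 < J i k ∧ 0 < J j k) → 0 < c) := by
  intro ρ f c
  set unitCoeff : Fin m → ℝ := fun k =>
    ∑ x : Fin n → Bool, logTwoCosh (∑ l, J l k * pm (x l) + g k) * pm (x i) * pm (x j)
  have hc : 2 ^ n * c = ∑ k, unitCoeff k := by
    have hf (x : Fin n → Bool) : f (fun a => pm (x a)) * pm (x i) * pm (x j) =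
        ∑ k, logTwoCosh (∑ l, J l k * pm (x l) + g k) * pm (x i) * pm (x j) +
          (∑ l, h l * pm (x l)) * pm (x i) * pm (x j) := by
      simp only [f, ρ, logTwoCosh, add_mul, sum_mul]
    simp only [c, unitCoeff, hf, sum_add_distrib, sum_linear_mul_pm_mul_pm h hij, add_zero]
    rw [sum_comm]
    field_simp
  have hunit_nonneg (k : Fin m) : 0 ≤ unitCoeff k :=
    sum_logTwoCosh_ridge_mul_pm_mul_pm_nonneg _ _ hij (mul_nonneg (hJ i k) (hJ j k))
  have h2n : (0 : ℝ) < 2 ^ n := by positivity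
  refine ⟨nonneg_of_mul_nonneg_right (hc ▸ sum_nonneg fun k _ => hunit_nonneg k) h2n,
    fun ⟨k, hik, hjk⟩ => pos_of_mul_pos_right (hc ▸ sum_pos' (fun k _ => hunit_nonneg k)
      ⟨k, mem_univ k, ?_⟩) h2n.le⟩
  exact sum_logTwoCosh_ridge_mul_pm_mul_pm_pos _ _ hij (mul_pos hik hjk)
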